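/- (Risk-consistency of the MDFS estimator) Suppose there exists a unique s* ∈ (0,1) with η(s*) = c, and there is ε₀ > 0 with [s* − ε₀, s* + ε₀] ⊆ (0,1) such that η is strictly monotone and differentiable on [s* − ε₀, s* + ε₀]. Let ε ∈ (0, 1/2) be such that s* ∈ (ε, 1−ε), and let ŝ_n be random variables taking values in (ε, 1−ε) with Ĝ*_n(ŝ_n, c) ≥ sup_{s ∈ (ε, 1−ε)} Ĝ*_n(s, c) − δ_n for a deterministic sequence δ_n → 0. Then R(ŝ_n) converges to 0 in probability as n → ∞. -/

import Mathlib

open Set MeasureTheory ProbabilityTheory intervalIntegral Filter Topology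


lemma mdfs_sign (η : ℝ → ℝ) (c : ℝ) (hη_cont : ContinuousOn η (Icc 0 1))
    (sstar : ℝ) (hstar : sstar ∈ Ioo (0:ℝ) 1) (hcross : η sstar = c)
    (huniq : ∀ s ∈ Ioo (0:ℝ) 1, η s = c → s = sstar)
    (ε₀ : ℝ) (hε₀ : 0 < ε₀) (hsub : Icc (sstar-ε₀) (sstar+ε₀) ⊆ Ioo (0:ℝ) 1)
    (hmono : StrictMonoOn η (Icc (sstar-ε₀) (sstar+ε₀))) :
    (∀ x ∈ Ioo (0:ℝ) sstar, η x < c) ∧ (∀ x ∈ Ioo sstar (1:ℝ), c < η x) := by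
  have hmem : sstar ∈ Icc (sstar-ε₀) (sstar+ε₀) :=
    ⟨by linarith, by linarith⟩
  constructor
  · intro x hx
    set t := min ε₀ ((sstar - x)/2) with ht
    have ht0 : 0 < t := lt_min hε₀ (by simp only [Ioo, mem_setOf_eq] at hx; linarith [hx.2])
    have htmem : sstar - t ∈ Icc (sstar-ε₀) (sstar+ε₀) :=
      ⟨by have := min_le_left ε₀ ((sstar-x)/2); linarith, by linarith⟩
    have hlt : η (sstar - t) < c := by
      rw [← hcross]; exact hmono htmem hmem (by linarith)
    have hxt : x < sstar - t := by
      have := min_le_right ε₀ ((sstar-x)/2); simp only [mem_Ioo] at hx; linarith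
    by_contra hcon
    push_neg at hcon
    have hsubI : Icc x (sstar - t) ⊆ Icc (0:ℝ) 1 := by
      intro y hy
      have h1 := hsub htmem
      simp only [mem_Ioo] at h1 hx
      exact ⟨by linarith [hy.1], by linarith [hy.2]⟩
    have hcont' : ContinuousOn η (Icc x (sstar - t)) := hη_cont.mono hsubI
    have hiv := intermediate_value_Icc' (le_of_lt hxt) hcont'
    have hcmem : c ∈ Icc (η (sstar - t)) (η x) := ⟨le_of_lt hlt, hcon⟩
    obtain ⟨y, hy, hyc⟩ := hiv hcmem
    have hy01 : y ∈ Ioo (0:ℝ) 1 := by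
      have h1 := hsub htmem
      simp only [mem_Ioo] at h1 hx ⊢
      constructor
      · linarith [hy.1, hx.1]
      · linarith [hy.2, h1.2]
    have := huniq y hy01 hyc
    subst this
    linarith [hy.2, ht0]
  · intro x hx
    set t := min ε₀ ((x - sstar)/2) with ht
    have ht0 : 0 < t := lt_min hε₀ (by simp only [mem_Ioo] at hx; linarith [hx.1])
    have htmem : sstar + t ∈ Icc (sstar-ε₀) (sstar+ε₀) :=
      ⟨by linarith, by have := min_le_left ε₀ ((x-sstar)/2); linarith⟩
    have hlt : c < η (sstar + t) := by
      rw [← hcross]; exact hmono hmem htmem (by linarith)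
    have hxt : sstar + t < x := by
      have := min_le_right ε₀ ((x-sstar)/2); simp only [mem_Ioo] at hx; linarith
    by_contra hcon
    push_neg at hcon
    have hsubI : Icc (sstar + t) x ⊆ Icc (0:ℝ) 1 := by
      intro y hy
      have h1 := hsub htmem
      simp only [mem_Ioo] at h1 hx
      exact ⟨by linarith [hy.1, h1.1], by linarith [hy.2, hx.2]⟩
    have hcont' : ContinuousOn η (Icc (sstar + t) x) := hη_cont.mono hsubI
    have hiv := intermediate_value_Icc' (le_of_lt hxt) hcont'
    have hcmem : c ∈ Icc (η x) (η (sstar + t)) := ⟨hcon, le_of_lt hlt⟩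
    obtain ⟨y, hy, hyc⟩ := hiv hcmem
    have hy01 : y ∈ Ioo (0:ℝ) 1 := by
      have h1 := hsub htmem
      simp only [mem_Ioo] at h1 hx ⊢
      exact ⟨by linarith [hy.1, h1.1], by linarith [hy.2, hx.2]⟩
    have := huniq y hy01 hyc
    subst this
    linarith [hy.1, ht0]


lemma mdfs_gap (η : ℝ → ℝ) (c : ℝ) (μL μR Gstar : ℝ → ℝ)
    (hμL : ∀ s ∈ Ioo (0:ℝ) 1, μL s = (∫ x in (0:ℝ)..s, η x) / s)
    (hμR : ∀ s ∈ Ioo (0:ℝ) 1, μR s = (∫ x in s..(1:ℝ), η x) / (1 - s))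
    (hGstar : ∀ s ∈ Ioo (0:ℝ) 1, Gstar s = s * |μL s - c| + (1 - s) * |μR s - c|)
    (hη_cont : ContinuousOn η (Icc 0 1))
    (sstar ε : ℝ) (hε : ε ∈ Ioo (0:ℝ) (1/2)) (hstar_mem : sstar ∈ Ioo ε (1 - ε))
    (hcross : η sstar = c)
    (hsgnL : ∀ x ∈ Ioo (0:ℝ) sstar, η x < c)
    (hsgnR : ∀ x ∈ Ioo sstar (1:ℝ), c < η x)
    (a : ℝ) (ha : 0 < a) :
    ∃ Δ > 0, ∀ s ∈ Ioo ε (1 - ε), Gstar sstar - Gstar s < Δ →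
      |s - sstar| < a ∧ μL s < c ∧ c < μR s := by
  obtain ⟨hε0, hε12⟩ := hε
  obtain ⟨hsε, hs1ε⟩ := hstar_mem
  have hs0 : 0 < sstar := lt_trans hε0 hsε
  have hs1 : sstar < 1 := by linarith
  -- integrability
  have hintη : ∀ p q : ℝ, p ∈ Icc (0:ℝ) 1 → q ∈ Icc (0:ℝ) 1 →
      IntervalIntegrable η volume p q := fun p q hp hq =>
    (hη_cont.mono (uIcc_subset_Icc hp hq)).intervalIntegrable
  have hint : ∀ p q : ℝ, p ∈ Icc (0:ℝ) 1 → q ∈ Icc (0:ℝ) 1 →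
      IntervalIntegrable (fun x => η x - c) volume p q := fun p q hp hq =>
    ((hη_cont.sub continuousOn_const).mono (uIcc_subset_Icc hp hq)).intervalIntegrable
  have hintc : ∀ p q : ℝ, p ∈ Icc (0:ℝ) 1 → q ∈ Icc (0:ℝ) 1 →
      IntervalIntegrable (fun x => c - η x) volume p q := fun p q hp hq =>
    ((continuousOn_const.sub hη_cont).mono (uIcc_subset_Icc hp hq)).intervalIntegrable
  -- φ and ψ decomposition of Gstar
  have hφL : ∀ t ∈ Ioo (0:ℝ) 1, μL t - c = (∫ x in (0:ℝ)..t, (η x - c)) / t := by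
    intro t ht
    have hti : t ∈ Icc (0:ℝ) 1 := ⟨le_of_lt ht.1, le_of_lt ht.2⟩
    have h0i : (0:ℝ) ∈ Icc (0:ℝ) 1 := ⟨le_refl _, by norm_num⟩
    rw [hμL t ht, integral_sub (hintη 0 t h0i hti) intervalIntegrable_const,
      intervalIntegral.integral_const]
    have htne : t ≠ 0 := ne_of_gt ht.1
    field_simp
    rw [sub_zero, smul_eq_mul]
  have hψR : ∀ t ∈ Ioo (0:ℝ) 1, μR t - c = (∫ x in t..(1:ℝ), (η x - c)) / (1 - t) := by
    intro t ht
    have hti : t ∈ Icc (0:ℝ) 1 := ⟨le_of_lt ht.1, le_of_lt ht.2⟩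
    have h1i : (1:ℝ) ∈ Icc (0:ℝ) 1 := ⟨by norm_num, le_refl _⟩
    rw [hμR t ht, integral_sub (hintη t 1 hti h1i) intervalIntegrable_const,
      intervalIntegral.integral_const]
    have htne : (1:ℝ) - t ≠ 0 := by intro h; have := ht.2; linarith [ht.2]
    field_simp
    rw [smul_eq_mul]
  have habs : ∀ t ∈ Ioo (0:ℝ) 1, Gstar t =
      |∫ x in (0:ℝ)..t, (η x - c)| + |∫ x in t..(1:ℝ), (η x - c)| := by
    intro t ht
    rw [hGstar t ht]
    have h1 : t * |μL t - c| = |∫ x in (0:ℝ)..t, (η x - c)| := by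
      rw [hφL t ht, abs_div, abs_of_pos ht.1]
      exact mul_div_cancel₀ _ (ne_of_gt ht.1)
    have h2 : (1 - t) * |μR t - c| = |∫ x in t..(1:ℝ), (η x - c)| := by
      have h1t : 0 < 1 - t := by linarith [ht.2]
      rw [hψR t ht, abs_div, abs_of_pos h1t]
      exact mul_div_cancel₀ _ (ne_of_gt h1t)
    rw [h1, h2]
  -- sign of φ* and ψ*
  have hnegflip : ∀ p q : ℝ, (∫ x in p..q, (η x - c)) = -∫ x in p..q, (c - η x) := by
    intro p q
    rw [← intervalIntegral.integral_neg]
    congr 1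
    funext x
    ring
  have hφstar : (∫ x in (0:ℝ)..sstar, (η x - c)) < 0 := by
    rw [hnegflip, neg_lt, neg_zero]
    apply intervalIntegral.intervalIntegral_pos_of_pos_on
      (hintc 0 sstar ⟨le_refl _, by norm_num⟩ ⟨le_of_lt hs0, le_of_lt hs1⟩)
    · intro x hx
      have := hsgnL x hx
      linarith
    · exact hs0
  have hψstar : 0 < ∫ x in sstar..(1:ℝ), (η x - c) := by
    apply intervalIntegral.intervalIntegral_pos_of_pos_on
      (hint sstar 1 ⟨le_of_lt hs0, le_of_lt hs1⟩ ⟨by norm_num, le_refl _⟩)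
    · intro x hx
      have := hsgnR x hx
      linarith
    · exact hs1
  -- the radius r and the quantities Dr, Er
  set r := min a (min ((sstar - ε)/2) ((1 - ε - sstar)/2)) with hrdef
  have hr0 : 0 < r := by
    apply lt_min ha
    apply lt_min <;> linarith
  have hra : r ≤ a := min_le_left _ _
  have hrε : ε < sstar - r := by
    have h2 := le_trans (min_le_right a _) (min_le_left ((sstar - ε)/2) ((1 - ε - sstar)/2))
    linarith
  have hrε' : sstar + r < 1 - ε := by
    have h2 := le_trans (min_le_right a _) (min_le_right ((sstar - ε)/2) ((1 - ε - sstar)/2))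
    linarith
  have hDr : 0 < ∫ x in (sstar - r)..sstar, (c - η x) := by
    apply intervalIntegral.intervalIntegral_pos_of_pos_on
      (hintc (sstar - r) sstar ⟨by linarith, by linarith⟩ ⟨le_of_lt hs0, le_of_lt hs1⟩)
    · intro x hx
      have := hsgnL x ⟨by linarith [hx.1], hx.2⟩
      linarith
    · linarith
  have hEr : 0 < ∫ x in sstar..(sstar + r), (η x - c) := by
    apply intervalIntegral.intervalIntegral_pos_of_pos_on
      (hint sstar (sstar + r) ⟨le_of_lt hs0, le_of_lt hs1⟩ ⟨by linarith, by linarith⟩)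
    · intro x hx
      have := hsgnR x ⟨hx.1, by linarith [hx.2]⟩
      linarith
    · linarith
  refine ⟨min (min (∫ x in sstar..(1:ℝ), (η x - c)) (-(∫ x in (0:ℝ)..sstar, (η x - c))))
    (min (∫ x in (sstar - r)..sstar, (c - η x)) (∫ x in sstar..(sstar + r), (η x - c))),
    lt_min (lt_min hψstar (by linarith)) (lt_min hDr hEr), ?_⟩
  set Δ := min (min (∫ x in sstar..(1:ℝ), (η x - c)) (-(∫ x in (0:ℝ)..sstar, (η x - c))))
    (min (∫ x in (sstar - r)..sstar, (c - η x)) (∫ x in sstar..(sstar + r), (η x - c))) with hΔdef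
  have hΔψ : Δ ≤ ∫ x in sstar..(1:ℝ), (η x - c) :=
    le_trans (min_le_left _ _) (min_le_left _ _)
  have hΔφ : Δ ≤ -(∫ x in (0:ℝ)..sstar, (η x - c)) :=
    le_trans (min_le_left _ _) (min_le_right _ _)
  have hΔD : Δ ≤ ∫ x in (sstar - r)..sstar, (c - η x) :=
    le_trans (min_le_right _ _) (min_le_left _ _)
  have hΔE : Δ ≤ ∫ x in sstar..(sstar + r), (η x - c) :=
    le_trans (min_le_right _ _) (min_le_right _ _)
  have hΔ0 : 0 < Δ := lt_min (lt_min hψstar (by linarith)) (lt_min hDr hEr)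
  intro s hs hgap
  obtain ⟨hsl, hsr⟩ := hs
  have hs01 : s ∈ Ioo (0:ℝ) 1 := ⟨by linarith, by linarith⟩
  have hsIcc : s ∈ Icc (0:ℝ) 1 := ⟨by linarith, by linarith⟩
  have hstarIcc : sstar ∈ Icc (0:ℝ) 1 := ⟨by linarith, by linarith⟩
  have h0Icc : (0:ℝ) ∈ Icc (0:ℝ) 1 := ⟨le_refl _, by norm_num⟩
  have h1Icc : (1:ℝ) ∈ Icc (0:ℝ) 1 := ⟨by norm_num, le_refl _⟩
  rw [habs sstar ⟨hs0, hs1⟩, habs s hs01] at hgap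
  rcases le_or_gt s sstar with hle | hlt
  · -- case s ≤ sstar
    set Dv := ∫ x in s..sstar, (c - η x) with hDvdef
    have hDv0 : 0 ≤ Dv := by
      apply intervalIntegral.integral_nonneg hle
      intro u hu
      rcases eq_or_lt_of_le hu.2 with h | h
      · rw [h, hcross]; linarith
      · have := hsgnL u ⟨by linarith [hu.1], h⟩; linarith
    have hadd : (∫ x in (0:ℝ)..s, (η x - c)) + (∫ x in s..sstar, (η x - c)) =
        ∫ x in (0:ℝ)..sstar, (η x - c) :=
      integral_add_adjacent_intervals (hint 0 s h0Icc hsIcc) (hint s sstar hsIcc hstarIcc)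
    have hmid : (∫ x in s..sstar, (η x - c)) = -Dv := by
      rw [hDvdef, ← intervalIntegral.integral_neg]
      congr 1; funext x; ring
    have hφs : (∫ x in (0:ℝ)..s, (η x - c)) =
        (∫ x in (0:ℝ)..sstar, (η x - c)) + Dv := by
      rw [hmid] at hadd; linarith
    have haddψ : (∫ x in s..sstar, (η x - c)) + (∫ x in sstar..(1:ℝ), (η x - c)) =
        ∫ x in s..(1:ℝ), (η x - c) :=
      integral_add_adjacent_intervals (hint s sstar hsIcc hstarIcc) (hint sstar 1 hstarIcc h1Icc)
    have hψs : (∫ x in s..(1:ℝ), (η x - c)) =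
        (∫ x in sstar..(1:ℝ), (η x - c)) - Dv := by
      rw [hmid] at haddψ; linarith
    have hφsneg : (∫ x in (0:ℝ)..s, (η x - c)) < 0 := by
      rw [hnegflip, neg_lt, neg_zero]
      apply intervalIntegral.intervalIntegral_pos_of_pos_on (hintc 0 s h0Icc hsIcc)
      · intro x hx
        have := hsgnL x ⟨hx.1, lt_of_lt_of_le hx.2 hle⟩
        linarith
      · linarith
    -- rewrite the gap
    rw [abs_of_neg hφstar, abs_of_pos hψstar, abs_of_neg hφsneg, hφs, hψs] at hgap
    have hDvψ : Dv < ∫ x in sstar..(1:ℝ), (η x - c) := by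
      by_contra hcon
      push_neg at hcon
      rw [abs_of_nonpos (by linarith)] at hgap
      linarith
    rw [abs_of_pos (by linarith)] at hgap
    -- now hgap : (-(φ*) + ψ*) - (-(φ* + Dv) + (ψ* - Dv)) < Δ, i.e. 2 Dv < Δ
    have h2Dv : 2 * Dv < Δ := by linarith
    have hclose : sstar - r < s := by
      by_contra hcon
      push_neg at hcon
      have hsplit : (∫ x in s..(sstar - r), (c - η x)) + (∫ x in (sstar - r)..sstar, (c - η x)) =
          Dv := integral_add_adjacent_intervals
            (hintc s (sstar - r) hsIcc ⟨by linarith, by linarith⟩)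
            (hintc (sstar - r) sstar ⟨by linarith, by linarith⟩ hstarIcc)
      have hnn : 0 ≤ ∫ x in s..(sstar - r), (c - η x) := by
        apply intervalIntegral.integral_nonneg hcon
        intro u hu
        have := hsgnL u ⟨by linarith [hu.1], by linarith [hu.2]⟩
        linarith
      linarith
    refine ⟨by rw [abs_of_nonpos (by linarith)]; linarith, ?_, ?_⟩
    · have := hφL s hs01
      have hq : μL s - c < 0 := by
        rw [this]
        exact div_neg_of_neg_of_pos hφsneg hs01.1
      linarith
    · have := hψR s hs01
      have hq : 0 < μR s - c := by
        rw [this, hψs]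
        apply div_pos (by linarith) (by linarith [hs01.2])
      linarith
  · -- case sstar < s
    set Ev := ∫ x in sstar..s, (η x - c) with hEvdef
    have hEv0 : 0 ≤ Ev := by
      apply intervalIntegral.integral_nonneg (le_of_lt hlt)
      intro u hu
      rcases eq_or_lt_of_le hu.1 with h | h
      · rw [← h, hcross]; linarith
      · have := hsgnR u ⟨h, by linarith [hu.2]⟩; linarith
    have hadd : (∫ x in (0:ℝ)..sstar, (η x - c)) + (∫ x in sstar..s, (η x - c)) =
        ∫ x in (0:ℝ)..s, (η x - c) :=
      integral_add_adjacent_intervals (hint 0 sstar h0Icc hstarIcc) (hint sstar s hstarIcc hsIcc)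
    have hφs : (∫ x in (0:ℝ)..s, (η x - c)) =
        (∫ x in (0:ℝ)..sstar, (η x - c)) + Ev := by linarith
    have haddψ : (∫ x in sstar..s, (η x - c)) + (∫ x in s..(1:ℝ), (η x - c)) =
        ∫ x in sstar..(1:ℝ), (η x - c) :=
      integral_add_adjacent_intervals (hint sstar s hstarIcc hsIcc) (hint s 1 hsIcc h1Icc)
    have hψs : (∫ x in s..(1:ℝ), (η x - c)) =
        (∫ x in sstar..(1:ℝ), (η x - c)) - Ev := by linarith
    have hψspos : 0 < ∫ x in s..(1:ℝ), (η x - c) := by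
      apply intervalIntegral.intervalIntegral_pos_of_pos_on (hint s 1 hsIcc h1Icc)
      · intro x hx
        have := hsgnR x ⟨by linarith [hx.1], hx.2⟩
        linarith
      · linarith
    rw [abs_of_neg hφstar, abs_of_pos hψstar, abs_of_pos hψspos, hφs, hψs] at hgap
    have hEvφ : Ev < -(∫ x in (0:ℝ)..sstar, (η x - c)) := by
      by_contra hcon
      push_neg at hcon
      rw [abs_of_nonneg (by linarith)] at hgap
      linarith
    rw [abs_of_neg (by linarith)] at hgap
    have h2Ev : 2 * Ev < Δ := by linarith
    have hclose : s < sstar + r := by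
      by_contra hcon
      push_neg at hcon
      have hsplit : (∫ x in sstar..(sstar + r), (η x - c)) +
          (∫ x in (sstar + r)..s, (η x - c)) = Ev :=
        integral_add_adjacent_intervals
          (hint sstar (sstar + r) hstarIcc ⟨by linarith, by linarith⟩)
          (hint (sstar + r) s ⟨by linarith, by linarith⟩ hsIcc)
      have hnn : 0 ≤ ∫ x in (sstar + r)..s, (η x - c) := by
        apply intervalIntegral.integral_nonneg hcon
        intro u hu
        have := hsgnR u ⟨by linarith [hu.1], by linarith [hu.2]⟩
        linarith
      linarith
    refine ⟨by rw [abs_of_pos (by linarith)]; linarith, ?_, ?_⟩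
    · have := hφL s hs01
      have hq : μL s - c < 0 := by
        rw [this, hφs]
        exact div_neg_of_neg_of_pos (by linarith) hs01.1
      linarith
    · have := hψR s hs01
      have hq : 0 < μR s - c := by
        rw [this]
        apply div_pos hψspos (by linarith [hs01.2])
      linarith


lemma mdfs_Rval (η : ℝ → ℝ) (c : ℝ) (μL μR : ℝ → ℝ) (μt : ℝ → ℝ → ℝ) (R : ℝ → ℝ)
    (hμt : ∀ x s, μt x s = if x ≤ s then μL s else μR s)
    (hR : ∀ s, R s = ∫ x in (0:ℝ)..1,
        ((if c < η x ∧ μt x s ≤ c then (1:ℝ) else 0) +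
         (if η x ≤ c ∧ c < μt x s then (1:ℝ) else 0)))
    (sstar ε : ℝ) (hε : ε ∈ Ioo (0:ℝ) (1/2)) (hstar_mem : sstar ∈ Ioo ε (1 - ε))
    (s : ℝ) (hs : s ∈ Ioo ε (1 - ε))
    (hcase : ((∀ x ∈ Ioo (0:ℝ) sstar, η x < c) ∧ (∀ x ∈ Ioo sstar (1:ℝ), c < η x)
                ∧ μL s < c ∧ c < μR s)
            ∨ ((∀ x ∈ Ioo (0:ℝ) sstar, c < η x) ∧ (∀ x ∈ Ioo sstar (1:ℝ), η x < c)
                ∧ c < μL s ∧ μR s < c)) :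
    R s = |s - sstar| := by
  obtain ⟨hε0, hε12⟩ := hε
  obtain ⟨hsl, hsr⟩ := hs
  obtain ⟨hssl, hssr⟩ := hstar_mem
  set m := min s sstar with hm
  set M := max s sstar with hM
  have hm0 : 0 < m := lt_min (by linarith) (by linarith)
  have hM1 : M < 1 := max_lt (by linarith) (by linarith)
  have hmM : m ≤ M := min_le_max
  -- the integrand agrees a.e. with the indicator of Ioo m M
  have hnull : (volume : Measure ℝ) ({s, sstar, 1} : Set ℝ) = 0 := by
    apply Set.Finite.measure_zero
    exact (Set.finite_singleton _).insert _ |>.insert _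
  have hae : ∀ᵐ x ∂(volume : Measure ℝ), x ∉ ({s, sstar, 1} : Set ℝ) :=
    (MeasureTheory.measure_eq_zero_iff_ae_notMem).mp hnull
  have hptwise : ∀ x, x ∉ ({s, sstar, 1} : Set ℝ) → x ∈ Ioc (0:ℝ) 1 →
      ((if c < η x ∧ μt x s ≤ c then (1:ℝ) else 0) +
       (if η x ≤ c ∧ c < μt x s then (1:ℝ) else 0)) = (Ioo m M).indicator 1 x := by
    intro x hxn hx
    simp only [mem_insert_iff, mem_singleton_iff, not_or] at hxn
    obtain ⟨hxs, hxstar, hx1⟩ := hxn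
    have hx0 : 0 < x := hx.1
    have hxlt1 : x < 1 := lt_of_le_of_ne hx.2 hx1
    rw [hμt]
    rcases lt_trichotomy x m with hc1 | hc1 | hc1
    · -- x < m : left of both
      have hxle : x ≤ s := by have := min_le_left s sstar; linarith
      have hxlt : x < sstar := by have := min_le_right s sstar; linarith
      rw [if_pos hxle, indicator_of_notMem (by simp [mem_Ioo]; intro h; linarith)]
      rcases hcase with ⟨h1, h2, h3, h4⟩ | ⟨h1, h2, h3, h4⟩
      · have := h1 x ⟨hx0, hxlt⟩
        rw [if_neg (by push_neg; intro h; linarith), if_neg (by push_neg; intro h; linarith)]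
        norm_num
      · have := h1 x ⟨hx0, hxlt⟩
        rw [if_neg (by push_neg; intro h; linarith), if_neg (by push_neg; intro h; linarith)]
        norm_num
    · exfalso
      rcases min_choice s sstar with h | h
      · exact hxs (by rw [hc1, hm, h])
      · exact hxstar (by rw [hc1, hm, h])
    · rcases lt_trichotomy x M with hc2 | hc2 | hc2
      · -- m < x < M
        have hin : x ∈ Ioo m M := ⟨hc1, hc2⟩
        rw [indicator_of_mem hin]
        rcases le_total s sstar with hss | hss
        · -- m = s, M = sstar, so s < x < sstar
          have hmm : m = s := min_eq_left hss
          have hMM : M = sstar := max_eq_right hss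
          have hxgt : ¬ (x ≤ s) := by rw [hmm] at hc1; linarith
          have hxlt : x < sstar := by rw [hMM] at hc2; exact hc2
          rw [if_neg hxgt]
          rcases hcase with ⟨h1, h2, h3, h4⟩ | ⟨h1, h2, h3, h4⟩
          · have := h1 x ⟨hx0, hxlt⟩
            rw [if_neg (by push_neg; intro h; linarith), if_pos ⟨by linarith, h4⟩]
            norm_num
          · have := h1 x ⟨hx0, hxlt⟩
            rw [if_pos ⟨this, le_of_lt h4⟩, if_neg (by push_neg; intro h; linarith)]
            norm_num
        · -- sstar < x < s
          have hmm : m = sstar := min_eq_right hss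
          have hMM : M = s := max_eq_left hss
          have hxle : x ≤ s := by rw [hMM] at hc2; linarith
          have hxgt : sstar < x := by rw [hmm] at hc1; exact hc1
          rw [if_pos hxle]
          rcases hcase with ⟨h1, h2, h3, h4⟩ | ⟨h1, h2, h3, h4⟩
          · have := h2 x ⟨hxgt, hxlt1⟩
            rw [if_pos ⟨this, le_of_lt h3⟩, if_neg (by push_neg; intro h; linarith)]
            norm_num
          · have := h2 x ⟨hxgt, hxlt1⟩
            rw [if_neg (by push_neg; intro h; linarith), if_pos ⟨by linarith, h3⟩]
            norm_num
      · exfalso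
        rcases max_choice s sstar with h | h
        · exact hxs (by rw [hc2, hM, h])
        · exact hxstar (by rw [hc2, hM, h])
      · -- x > M : right of both
        have hxgt : ¬ (x ≤ s) := by have := le_max_left s sstar; push_neg; linarith
        have hxgtstar : sstar < x := by have := le_max_right s sstar; linarith
        rw [if_neg hxgt, indicator_of_notMem (by simp [mem_Ioo]; intro h; linarith)]
        rcases hcase with ⟨h1, h2, h3, h4⟩ | ⟨h1, h2, h3, h4⟩
        · have := h2 x ⟨hxgtstar, hxlt1⟩
          rw [if_neg (by push_neg; intro h; linarith), if_neg (by push_neg; intro h; linarith)]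
          norm_num
        · have := h2 x ⟨hxgtstar, hxlt1⟩
          rw [if_neg (by push_neg; intro h; linarith), if_neg (by push_neg; intro h; linarith)]
          norm_num
  rw [hR s, intervalIntegral.integral_of_le (by norm_num : (0:ℝ) ≤ 1)]
  have hcongr : ∫ x in Ioc (0:ℝ) 1,
      ((if c < η x ∧ μt x s ≤ c then (1:ℝ) else 0) +
       (if η x ≤ c ∧ c < μt x s then (1:ℝ) else 0)) ∂volume =
      ∫ x in Ioc (0:ℝ) 1, (Ioo m M).indicator 1 x ∂volume := by
    apply MeasureTheory.setIntegral_congr_ae measurableSet_Ioc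
    filter_upwards [hae] with x hx hxmem
    exact hptwise x hx hxmem
  rw [hcongr, MeasureTheory.setIntegral_indicator measurableSet_Ioo]
  have hsub : Ioc (0:ℝ) 1 ∩ Ioo m M = Ioo m M := by
    apply inter_eq_self_of_subset_right
    intro x hx
    exact ⟨lt_trans hm0 hx.1, le_of_lt (lt_trans hx.2 hM1)⟩
  rw [hsub]
  simp only [Pi.one_apply, MeasureTheory.setIntegral_const, smul_eq_mul, mul_one]
  rw [measureReal_def, Real.volume_Ioo, ENNReal.toReal_ofReal (by linarith)]
  rcases le_total s sstar with h | h
  · rw [abs_of_nonpos (by linarith), hM, hm, max_eq_right h, min_eq_left h]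
    try ring
  · rw [abs_of_nonneg (by linarith), hM, hm, max_eq_left h, min_eq_right h]
    try ring


lemma mdfs_lln {Ω : Type*} [MeasureSpace Ω] [IsProbabilityMeasure (ℙ : Measure Ω)]
    (X Y : ℕ → Ω → ℝ)
    (hX_meas : ∀ i, Measurable (X i)) (hY_meas : ∀ i, Measurable (Y i))
    (hiid : iIndepFun (m := fun _ : ℕ => (inferInstance : MeasurableSpace (ℝ × ℝ)))
        (fun i ω => (X i ω, Y i ω)) ℙ)
    (hident : ∀ i j : ℕ, Measure.map (fun ω => (X i ω, Y i ω)) (ℙ : Measure Ω) =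
        Measure.map (fun ω => (X j ω, Y j ω)) (ℙ : Measure Ω))
    (g : ℝ × ℝ → ℝ) (hg : Measurable g)
    (hgint : Integrable (fun ω => g (X 0 ω, Y 0 ω)) (ℙ : Measure Ω)) :
    ∀ t : ℝ, 0 < t → Tendsto (fun n => (ℙ : Measure Ω)
      {ω | t ≤ |(∑ i ∈ Finset.range n, g (X i ω, Y i ω)) / n
        - ∫ ω', g (X 0 ω', Y 0 ω') ∂(ℙ : Measure Ω)|}) atTop (𝓝 0) := by
  have hpm : ∀ i, Measurable (fun ω => (X i ω, Y i ω)) :=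
    fun i => (hX_meas i).prodMk (hY_meas i)
  have hZmeas : ∀ i, Measurable (fun ω => g (X i ω, Y i ω)) :=
    fun i => hg.comp (hpm i)
  have hindep : Pairwise (Function.onFun (IndepFun · · (ℙ : Measure Ω))
      (fun i ω => g (X i ω, Y i ω))) := by
    intro i j hij
    exact (hiid.indepFun hij).comp hg hg
  have hid : ∀ i, IdentDistrib (fun ω => g (X i ω, Y i ω)) (fun ω => g (X 0 ω, Y 0 ω))
      (ℙ : Measure Ω) (ℙ : Measure Ω) :=
    fun i => IdentDistrib.comp ⟨(hpm i).aemeasurable, (hpm 0).aemeasurable, hident i 0⟩ hg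
  have hlln := strong_law_ae_real (fun i ω => g (X i ω, Y i ω)) hgint hindep hid
  have htim : TendstoInMeasure (ℙ : Measure Ω)
      (fun n ω => (∑ i ∈ Finset.range n, g (X i ω, Y i ω)) / n) atTop
      (fun _ => ∫ ω', g (X 0 ω', Y 0 ω') ∂(ℙ : Measure Ω)) := by
    apply tendstoInMeasure_of_tendsto_ae
    · intro n
      exact ((Finset.measurable_sum _ (fun i _ => hZmeas i)).div_const _).aestronglyMeasurable
    · exact hlln
  intro t ht
  have := tendstoInMeasure_iff_dist.mp htim t ht
  simpa [Real.dist_eq] using this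

lemma mdfs_ratio01 (num den : ℝ) (h0 : 0 ≤ num) (h1 : num ≤ den) :
    0 ≤ num / den ∧ num / den ≤ 1 := by
  rcases eq_or_lt_of_le (le_trans h0 h1) with h | h
  · rw [← h, div_zero]; norm_num
  · exact ⟨div_nonneg h0 (le_of_lt h), (div_le_one h).mpr h1⟩

lemma mdfs_E1 {Ω : Type*} [MeasureSpace Ω] [IsProbabilityMeasure (ℙ : Measure Ω)]
    (X0 : Ω → ℝ) (hm : Measurable X0)
    (hunif : Measure.map X0 (ℙ : Measure Ω) = volume.restrict (Icc (0:ℝ) 1))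
    (q : ℝ) (hq0 : 0 ≤ q) (hq1 : q ≤ 1) :
    ∫ ω, (if X0 ω ≤ q then (1:ℝ) else 0) ∂(ℙ : Measure Ω) = q := by
  have heq : (fun ω => if X0 ω ≤ q then (1:ℝ) else 0) =
      Set.indicator (X0 ⁻¹' Iic q) (fun _ => (1:ℝ)) := by
    funext ω
    by_cases h : X0 ω ≤ q <;> simp [h, Set.indicator, Set.mem_preimage, Set.mem_Iic]
  rw [heq, MeasureTheory.integral_indicator_const _ (hm measurableSet_Iic)]
  have hmap : (ℙ : Measure Ω) (X0 ⁻¹' Iic q) = volume.restrict (Icc (0:ℝ) 1) (Iic q) := by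
    rw [← hunif, Measure.map_apply hm measurableSet_Iic]
  rw [measureReal_def, hmap, Measure.restrict_apply measurableSet_Iic]
  have : Iic q ∩ Icc (0:ℝ) 1 = Icc 0 q := by
    ext x
    simp only [mem_inter_iff, mem_Iic, mem_Icc]
    constructor
    · rintro ⟨h1, h2, _⟩; exact ⟨h2, h1⟩
    · rintro ⟨h1, h2⟩; exact ⟨h2, h1, le_trans h2 hq1⟩
  rw [this, Real.volume_Icc, ENNReal.toReal_ofReal (by linarith)]
  simp

lemma mdfs_E2 {Ω : Type*} [MeasureSpace Ω] [IsProbabilityMeasure (ℙ : Measure Ω)]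
    (η : ℝ → ℝ) (hη_mem : ∀ x ∈ Icc (0:ℝ) 1, η x ∈ Icc (0:ℝ) 1)
    (X0 Y0 : Ω → ℝ) (hmX : Measurable X0) (hmY : Measurable Y0)
    (hY01 : ∀ ω, Y0 ω = 0 ∨ Y0 ω = 1)
    (hjoint : ∀ A : Set ℝ, MeasurableSet A →
        (ℙ : Measure Ω) {ω | X0 ω ∈ A ∧ Y0 ω = 1} =
          ENNReal.ofReal (∫ x in A ∩ Icc (0:ℝ) 1, η x))
    (q : ℝ) (hq0 : 0 ≤ q) (hq1 : q ≤ 1) :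
    ∫ ω, Y0 ω * (if X0 ω ≤ q then (1:ℝ) else 0) ∂(ℙ : Measure Ω) =
      ∫ x in (0:ℝ)..q, η x := by
  have heq : (fun ω => Y0 ω * (if X0 ω ≤ q then (1:ℝ) else 0)) =
      Set.indicator {ω | X0 ω ∈ Iic q ∧ Y0 ω = 1} (fun _ => (1:ℝ)) := by
    funext ω
    rcases hY01 ω with h | h <;> by_cases h2 : X0 ω ≤ q <;>
      simp [h, h2, Set.indicator, Set.mem_setOf_eq, Set.mem_Iic]
  have hms : MeasurableSet {ω | X0 ω ∈ Iic q ∧ Y0 ω = 1} := by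
    have : {ω | X0 ω ∈ Iic q ∧ Y0 ω = 1} = X0 ⁻¹' (Iic q) ∩ Y0 ⁻¹' {1} := by
      ext ω; simp [Set.mem_preimage, Set.mem_Iic]
    rw [this]
    exact (hmX measurableSet_Iic).inter (hmY (measurableSet_singleton 1))
  rw [heq, MeasureTheory.integral_indicator_const _ hms]
  rw [measureReal_def, hjoint (Iic q) measurableSet_Iic]
  have hset : Iic q ∩ Icc (0:ℝ) 1 = Icc 0 q := by
    ext x
    simp only [mem_inter_iff, mem_Iic, mem_Icc]
    constructor
    · rintro ⟨h1, h2, _⟩; exact ⟨h2, h1⟩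
    · rintro ⟨h1, h2⟩; exact ⟨h2, h1, le_trans h2 hq1⟩
  rw [hset]
  have hnn : 0 ≤ ∫ x in Icc (0:ℝ) q, η x :=
    MeasureTheory.setIntegral_nonneg measurableSet_Icc
      (fun x hx => (hη_mem x ⟨hx.1, le_trans hx.2 hq1⟩).1)
  rw [ENNReal.toReal_ofReal hnn]
  rw [intervalIntegral.integral_of_le hq0, MeasureTheory.integral_Icc_eq_integral_Ioc]
  simp

lemma mdfs_E3 {Ω : Type*} [MeasureSpace Ω] [IsProbabilityMeasure (ℙ : Measure Ω)]
    (η : ℝ → ℝ) (hη_mem : ∀ x ∈ Icc (0:ℝ) 1, η x ∈ Icc (0:ℝ) 1)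
    (X0 Y0 : Ω → ℝ) (hmX : Measurable X0) (hmY : Measurable Y0)
    (hY01 : ∀ ω, Y0 ω = 0 ∨ Y0 ω = 1)
    (hjoint : ∀ A : Set ℝ, MeasurableSet A →
        (ℙ : Measure Ω) {ω | X0 ω ∈ A ∧ Y0 ω = 1} =
          ENNReal.ofReal (∫ x in A ∩ Icc (0:ℝ) 1, η x)) :
    ∫ ω, Y0 ω ∂(ℙ : Measure Ω) = ∫ x in (0:ℝ)..1, η x := by
  have heq2 : (fun ω => Y0 ω) = Set.indicator {ω | X0 ω ∈ univ ∧ Y0 ω = 1} (fun _ => (1:ℝ)) := by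
    funext ω
    rcases hY01 ω with h | h <;> simp [h, Set.indicator]
  have hms : MeasurableSet {ω | X0 ω ∈ univ ∧ Y0 ω = 1} := by
    have : {ω | X0 ω ∈ univ ∧ Y0 ω = 1} = Y0 ⁻¹' {1} := by
      ext ω; simp
    rw [this]
    exact hmY (measurableSet_singleton 1)
  rw [heq2, MeasureTheory.integral_indicator_const _ hms]
  rw [measureReal_def, hjoint univ MeasurableSet.univ]
  rw [Set.univ_inter]
  have hnn : 0 ≤ ∫ x in Icc (0:ℝ) 1, η x :=
    MeasureTheory.setIntegral_nonneg measurableSet_Icc (fun x hx => (hη_mem x hx).1)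
  rw [ENNReal.toReal_ofReal hnn]
  rw [intervalIntegral.integral_of_le (by norm_num : (0:ℝ) ≤ 1),
    MeasureTheory.integral_Icc_eq_integral_Ioc]
  simp

lemma mdfs_grid (F G : ℝ → ℝ) (hF : Monotone F)
    (hG : ∀ p q : ℝ, 0 ≤ p → p ≤ q → q ≤ 1 → G p ≤ G q ∧ G q - G p ≤ q - p)
    (k : ℕ) (hk : 1 ≤ k) (θ : ℝ)
    (hgrid : ∀ j ≤ k, |F ((j:ℝ)/k) - G ((j:ℝ)/k)| ≤ θ) :
    ∀ s, 0 ≤ s → s ≤ 1 → |F s - G s| ≤ θ + 1/k := by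
  have hkpos : (0:ℝ) < k := by exact_mod_cast hk
  have hkinv : 0 ≤ 1/(k:ℝ) := by positivity
  intro s hs0 hs1
  rcases eq_or_lt_of_le hs1 with h1 | h1
  · have := hgrid k (le_refl k)
    rw [div_self (ne_of_gt hkpos)] at this
    subst h1
    linarith [abs_nonneg (F 1 - G 1)]
  · set j := ⌊s * k⌋₊ with hj
    have hjk : j < k := by
      rw [hj]
      apply Nat.floor_lt (by positivity) |>.mpr
      calc s * k < 1 * k := by apply mul_lt_mul_of_pos_right h1 hkpos
        _ = k := one_mul _
    have hj1 : (j:ℝ) ≤ s * k := Nat.floor_le (by positivity)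
    have hj2 : s * k < (j:ℝ) + 1 := Nat.lt_floor_add_one _
    have ha1 : (j:ℝ)/k ≤ s := by rw [div_le_iff₀ hkpos]; linarith
    have ha2 : s ≤ ((j:ℝ)+1)/k := by rw [le_div_iff₀ hkpos]; linarith
    have hj0 : (0:ℝ) ≤ (j:ℝ)/k := by positivity
    have hjk1 : ((j:ℝ)+1)/k ≤ 1 := by
      rw [div_le_one hkpos]
      have : (j:ℝ) + 1 ≤ (k:ℝ) := by exact_mod_cast Nat.succ_le_of_lt hjk
      linarith
    have hgA := hgrid j (le_of_lt hjk)
    have hgB := hgrid (j+1) hjk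
    push_cast at hgB
    rw [abs_le] at hgA hgB
    have hFA : F ((j:ℝ)/k) ≤ F s := hF ha1
    have hFB : F s ≤ F (((j:ℝ)+1)/k) := hF ha2
    have hG1 := hG ((j:ℝ)/k) s hj0 ha1 hs1
    have hG2 := hG s (((j:ℝ)+1)/k) hs0 ha2 hjk1
    have hG3 := hG ((j:ℝ)/k) (((j:ℝ)+1)/k) hj0 (le_trans ha1 ha2) hjk1
    have hdiff : ((j:ℝ)+1)/k - (j:ℝ)/k = 1/k := by field_simp; ring
    rw [abs_le]
    constructor
    · -- -(θ + 1/k) ≤ F s - G s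
      have : G s - G ((j:ℝ)/k) ≤ 1/k := by
        have := hG1.2
        linarith
      linarith [hgA.1, hG1.1]
    · have : G (((j:ℝ)+1)/k) - G s ≤ 1/k := by
        have := hG2.2
        linarith
      linarith [hgB.2, hG2.1]

set_option maxHeartbeats 1000000 in
lemma mdfs_close (c s εr u F h y Ie Itot : ℝ)
    (hc0 : 0 ≤ c) (hc1 : c ≤ 1) (hεr : 0 < εr)
    (hs : εr ≤ s) (hs1 : s ≤ 1 - εr)
    (hu : 0 ≤ u) (hu2 : u ≤ εr/2)
    (hF : |F - s| ≤ u) (hh : |h - Ie| ≤ u) (hy : |y - Itot| ≤ u)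
    (hIe0 : 0 ≤ Ie) (hIeI : Ie ≤ Itot) (hItot : Itot ≤ 1) :
    |(s * |h/F - c| + (1-s) * |(y - h)/(1 - F) - c|) -
     (|Ie - c*s| + |(Itot - Ie) - c*(1-s)|)| ≤ 10*u/εr := by
  have hs01 : 0 < s := lt_of_lt_of_le hεr hs
  have hs11 : s < 1 := by linarith
  rw [abs_le] at hF hh hy
  have hFlo : εr/2 ≤ F := by linarith
  have hFpos : 0 < F := by linarith
  have h1Flo : εr/2 ≤ 1 - F := by linarith
  have h1Fpos : 0 < 1 - F := by linarith
  -- left piece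
  have hL : abs (s * |h/F - c| - |Ie - c*s|) ≤ 4*u/εr := by
    have e1 : s * |h/F - c| = |s * (h/F) - c*s| := by
      rw [show s * (h/F) - c*s = s * (h/F - c) by ring, abs_mul, abs_of_pos hs01]
    have e2a : |s * (h/F) - c*s| - |Ie - c*s| ≤ |s * (h/F) - Ie| := by
      have h0 := abs_sub_abs_le_abs_sub (s * (h/F) - c*s) (Ie - c*s)
      have heq : s * (h/F) - c*s - (Ie - c*s) = s * (h/F) - Ie := by ring
      rw [heq] at h0; linarith
    have e2b : |Ie - c*s| - |s * (h/F) - c*s| ≤ |s * (h/F) - Ie| := by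
      have h0 := abs_sub_abs_le_abs_sub (Ie - c*s) (s * (h/F) - c*s)
      have heq : Ie - c*s - (s * (h/F) - c*s) = -(s * (h/F) - Ie) := by ring
      rw [heq, abs_neg] at h0; linarith
    have e3 : |s * (h/F) - Ie| ≤ 4*u/εr := by
      have enum : s * (h/F) - Ie = (s*h - Ie*F)/F := by field_simp
      rw [enum, abs_div, abs_of_pos hFpos]
      have hnum : |s*h - Ie*F| ≤ 2*u := by
        have d1 : s*h - Ie*F = s*(h - Ie) + Ie*(s - F) := by ring
        rw [d1]
        have b1 : |s*(h - Ie)| ≤ u := by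
          rw [abs_mul, abs_of_pos hs01]
          have : |h - Ie| ≤ u := abs_le.mpr hh
          nlinarith [abs_nonneg (h - Ie)]
        have b2 : |Ie*(s - F)| ≤ u := by
          rw [abs_mul, abs_of_nonneg hIe0]
          have : |s - F| ≤ u := by rw [abs_le]; constructor <;> linarith
          nlinarith [abs_nonneg (s - F), hIeI, hItot]
        calc |s*(h - Ie) + Ie*(s - F)| ≤ |s*(h - Ie)| + |Ie*(s - F)| := abs_add_le _ _
          _ ≤ 2*u := by linarith
      rw [div_le_div_iff₀ hFpos hεr]
      nlinarith
    rw [e1, abs_le]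
    exact ⟨by linarith [e2b], by linarith [e2a]⟩
  -- right piece
  have hR : abs ((1-s) * |(y - h)/(1 - F) - c| - |(Itot - Ie) - c*(1-s)|) ≤ 6*u/εr := by
    have h1s : 0 < 1 - s := by linarith
    have e1 : (1-s) * |(y - h)/(1 - F) - c| = |(1-s) * ((y - h)/(1-F)) - c*(1-s)| := by
      rw [show (1-s) * ((y - h)/(1-F)) - c*(1-s) = (1-s) * ((y - h)/(1-F) - c) by ring,
        abs_mul, abs_of_pos h1s]
    have e2a : |(1-s) * ((y - h)/(1-F)) - c*(1-s)| - |(Itot - Ie) - c*(1-s)| ≤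
        |(1-s) * ((y - h)/(1-F)) - (Itot - Ie)| := by
      have := abs_sub_abs_le_abs_sub ((1-s) * ((y - h)/(1-F)) - c*(1-s))
        ((Itot - Ie) - c*(1-s))
      have heq : (1-s) * ((y - h)/(1-F)) - c*(1-s) - ((Itot - Ie) - c*(1-s)) =
          (1-s) * ((y - h)/(1-F)) - (Itot - Ie) := by ring
      rw [heq] at this; linarith
    have e2b : |(Itot - Ie) - c*(1-s)| - |(1-s) * ((y - h)/(1-F)) - c*(1-s)| ≤
        |(1-s) * ((y - h)/(1-F)) - (Itot - Ie)| := by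
      have := abs_sub_abs_le_abs_sub ((Itot - Ie) - c*(1-s))
        ((1-s) * ((y - h)/(1-F)) - c*(1-s))
      have heq : (Itot - Ie) - c*(1-s) - ((1-s) * ((y - h)/(1-F)) - c*(1-s)) =
          -((1-s) * ((y - h)/(1-F)) - (Itot - Ie)) := by ring
      rw [heq, abs_neg] at this; linarith
    have e3 : |(1-s) * ((y - h)/(1-F)) - (Itot - Ie)| ≤ 6*u/εr := by
      have enum : (1-s) * ((y - h)/(1-F)) - (Itot - Ie) =
          ((1-s)*(y-h) - (Itot - Ie)*(1-F))/(1-F) := by field_simp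
      rw [enum, abs_div, abs_of_pos h1Fpos]
      have hnum : |(1-s)*(y-h) - (Itot - Ie)*(1-F)| ≤ 3*u := by
        have d1 : (1-s)*(y-h) - (Itot - Ie)*(1-F) =
            (1-s)*((y-h) - (Itot - Ie)) + (Itot - Ie)*((1-s) - (1-F)) := by ring
        rw [d1]
        have b1 : |(1-s)*((y-h) - (Itot - Ie))| ≤ 2*u := by
          rw [abs_mul, abs_of_pos h1s]
          have hz : |(y-h) - (Itot - Ie)| ≤ 2*u := by
            have heq : (y-h) - (Itot - Ie) = (y - Itot) - (h - Ie) := by ring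
            rw [heq]
            calc |(y - Itot) - (h - Ie)| ≤ |y - Itot| + |h - Ie| := abs_sub _ _
              _ ≤ 2*u := by
                have := abs_le.mpr hy
                have := abs_le.mpr hh
                linarith
          nlinarith [abs_nonneg ((y-h) - (Itot - Ie))]
        have b2 : |(Itot - Ie)*((1-s) - (1-F))| ≤ u := by
          rw [abs_mul, abs_of_nonneg (by linarith : 0 ≤ Itot - Ie)]
          have : |(1-s) - (1-F)| ≤ u := by rw [abs_le]; constructor <;> linarith
          nlinarith [abs_nonneg ((1-s) - (1-F))]
        calc |(1-s)*((y-h) - (Itot - Ie)) + (Itot - Ie)*((1-s) - (1-F))| ≤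
            |(1-s)*((y-h) - (Itot - Ie))| + |(Itot - Ie)*((1-s) - (1-F))| := abs_add_le _ _
          _ ≤ 3*u := by linarith
      rw [div_le_div_iff₀ h1Fpos hεr]
      nlinarith
    rw [e1, abs_le]
    exact ⟨by linarith [e2a], by linarith [e2b]⟩
  calc |(s * |h/F - c| + (1-s) * |(y - h)/(1 - F) - c|) -
      (|Ie - c*s| + |(Itot - Ie) - c*(1-s)|)|
      = |(s * |h/F - c| - |Ie - c*s|) +
        ((1-s) * |(y - h)/(1 - F) - c| - |(Itot - Ie) - c*(1-s)|)| := by congr 1; ring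
    _ ≤ abs (s * |h/F - c| - |Ie - c*s|) +
        abs ((1-s) * |(y - h)/(1 - F) - c| - |(Itot - Ie) - c*(1-s)|) := abs_add_le _ _
    _ ≤ 4*u/εr + 6*u/εr := by linarith
    _ = 10*u/εr := by ring

lemma mdfs_det (η : ℝ → ℝ) (c : ℝ)
    (hη_cont : ContinuousOn η (Icc 0 1))
    (μL μR Gstar : ℝ → ℝ) (μt : ℝ → ℝ → ℝ) (R : ℝ → ℝ)
    (hμL : ∀ s, μL s = (∫ x in (0:ℝ)..s, η x) / s)
    (hμR : ∀ s, μR s = (∫ x in s..(1:ℝ), η x) / (1 - s))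
    (hGstar : ∀ s, Gstar s = s * |μL s - c| + (1 - s) * |μR s - c|)
    (hμt : ∀ x s, μt x s = if x ≤ s then μL s else μR s)
    (hR : ∀ s, R s = ∫ x in (0:ℝ)..1,
        ((if c < η x ∧ μt x s ≤ c then (1:ℝ) else 0) +
         (if η x ≤ c ∧ c < μt x s then (1:ℝ) else 0)))
    (sstar : ℝ) (hstar : sstar ∈ Ioo (0:ℝ) 1) (hcross : η sstar = c)
    (huniq : ∀ s ∈ Ioo (0:ℝ) 1, η s = c → s = sstar)
    (ε₀ : ℝ) (hε₀ : 0 < ε₀)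
    (hsub : Icc (sstar - ε₀) (sstar + ε₀) ⊆ Ioo (0:ℝ) 1)
    (hmono : StrictMonoOn η (Icc (sstar - ε₀) (sstar + ε₀)) ∨
             StrictAntiOn η (Icc (sstar - ε₀) (sstar + ε₀)))
    (ε : ℝ) (hε : ε ∈ Ioo (0:ℝ) (1/2)) (hstar_mem : sstar ∈ Ioo ε (1 - ε))
    (a : ℝ) (ha : 0 < a) :
    ∃ Δ > 0, ∀ s ∈ Ioo ε (1 - ε), Gstar sstar - Gstar s < Δ →
      R s = |s - sstar| ∧ |s - sstar| < a := by
  have hintη : ∀ p q : ℝ, p ∈ Icc (0:ℝ) 1 → q ∈ Icc (0:ℝ) 1 →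
      IntervalIntegrable η volume p q := fun p q hp hq =>
    (hη_cont.mono (uIcc_subset_Icc hp hq)).intervalIntegrable
  rcases hmono with hinc | hdec
  · obtain ⟨hsgnL, hsgnR⟩ := mdfs_sign η c hη_cont sstar hstar hcross huniq ε₀ hε₀ hsub hinc
    obtain ⟨Δ, hΔ0, hΔ⟩ := mdfs_gap η c μL μR Gstar (fun s _ => hμL s) (fun s _ => hμR s)
      (fun s _ => hGstar s) hη_cont sstar ε hε hstar_mem hcross hsgnL hsgnR a ha
    refine ⟨Δ, hΔ0, fun s hs hgap => ?_⟩
    obtain ⟨h1, h2, h3⟩ := hΔ s hs hgap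
    exact ⟨mdfs_Rval η c μL μR μt R hμt hR sstar ε hε hstar_mem s hs
      (Or.inl ⟨hsgnL, hsgnR, h2, h3⟩), h1⟩
  · set η' : ℝ → ℝ := fun x => 2*c - η x with hη'
    have hcont' : ContinuousOn η' (Icc 0 1) := continuousOn_const.sub hη_cont
    have hcross' : η' sstar = c := by rw [hη']; simp only; rw [hcross]; ring
    have huniq' : ∀ y ∈ Ioo (0:ℝ) 1, η' y = c → y = sstar := by
      intro y hy h
      apply huniq y hy
      simp only [hη'] at h
      linarith
    have hmono' : StrictMonoOn η' (Icc (sstar - ε₀) (sstar + ε₀)) := by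
      intro x hx y hy hxy
      have := hdec hx hy hxy
      simp only [hη']
      linarith
    obtain ⟨hsgnL', hsgnR'⟩ := mdfs_sign η' c hcont' sstar hstar hcross' huniq' ε₀ hε₀ hsub hmono'
    have hsgnL : ∀ x ∈ Ioo (0:ℝ) sstar, c < η x := by
      intro x hx; have := hsgnL' x hx; simp only [hη'] at this; linarith
    have hsgnR : ∀ x ∈ Ioo sstar (1:ℝ), η x < c := by
      intro x hx; have := hsgnR' x hx; simp only [hη'] at this; linarith
    set μL' : ℝ → ℝ := fun s => 2*c - μL s with hμL'def
    set μR' : ℝ → ℝ := fun s => 2*c - μR s with hμR'def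
    have habs2 : ∀ z : ℝ, |2*c - z - c| = |z - c| := by
      intro z
      rw [show 2*c - z - c = -(z - c) by ring, abs_neg]
    have hμL' : ∀ s ∈ Ioo (0:ℝ) 1, μL' s = (∫ x in (0:ℝ)..s, η' x) / s := by
      intro s hs
      have : (∫ x in (0:ℝ)..s, η' x) = (s - 0) • (2*c) - ∫ x in (0:ℝ)..s, η x := by
        rw [← intervalIntegral.integral_const]
        rw [← intervalIntegral.integral_sub intervalIntegrable_const
          (hintη 0 s ⟨le_refl _, by norm_num⟩ ⟨le_of_lt hs.1, le_of_lt hs.2⟩)]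
      rw [this, hμL'def]
      simp only
      rw [hμL s]
      have hsne : s ≠ 0 := ne_of_gt hs.1
      field_simp
      ring
    have hμR' : ∀ s ∈ Ioo (0:ℝ) 1, μR' s = (∫ x in s..(1:ℝ), η' x) / (1 - s) := by
      intro s hs
      have : (∫ x in s..(1:ℝ), η' x) = ((1:ℝ) - s) • (2*c) - ∫ x in s..(1:ℝ), η x := by
        rw [← intervalIntegral.integral_const]
        rw [← intervalIntegral.integral_sub intervalIntegrable_const
          (hintη s 1 ⟨le_of_lt hs.1, le_of_lt hs.2⟩ ⟨by norm_num, le_refl _⟩)]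
      rw [this, hμR'def]
      simp only
      rw [hμR s]
      have hsne : (1:ℝ) - s ≠ 0 := by have := hs.2; intro h; linarith
      field_simp
      ring
    have hGstar' : ∀ s ∈ Ioo (0:ℝ) 1, Gstar s = s * |μL' s - c| + (1 - s) * |μR' s - c| := by
      intro s _
      rw [hGstar s, hμL'def, hμR'def]
      simp only
      rw [habs2 (μL s), habs2 (μR s)]
    obtain ⟨Δ, hΔ0, hΔ⟩ := mdfs_gap η' c μL' μR' Gstar hμL' hμR' hGstar' hcont' sstar ε hε
      hstar_mem hcross' hsgnL' hsgnR' a ha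
    refine ⟨Δ, hΔ0, fun s hs hgap => ?_⟩
    obtain ⟨h1, h2, h3⟩ := hΔ s hs hgap
    simp only [hμL'def, hμR'def] at h2 h3
    exact ⟨mdfs_Rval η c μL μR μt R hμt hR sstar ε hε hstar_mem s hs
      (Or.inr ⟨hsgnL, hsgnR, by linarith, by linarith⟩), h1⟩

set_option maxHeartbeats 2000000 in
/-- Risk-consistency of the MDFS estimator: Suppose there exists a
unique `s* ∈ (0,1)` with `η s* = c`, and there is `ε₀ > 0` with
`[s* - ε₀, s* + ε₀] ⊆ (0,1)` such that `η` is strictly monotone and differentiable on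
`[s* - ε₀, s* + ε₀]`. Let `ε ∈ (0, 1/2)` with `s* ∈ (ε, 1-ε)`, and let `ŝ_n` take
values in `(ε, 1-ε)` with `Ĝ*_n(ŝ_n, c) ≥ sup_{s ∈ (ε, 1-ε)} Ĝ*_n(s, c) - δ_n` for
deterministic `δ_n → 0`. Then `R(ŝ_n) → 0` in probability. -/
theorem mdfs_estimator_risk_consistency
    (η : ℝ → ℝ) (c : ℝ) (hc : c ∈ Set.Ioo (0:ℝ) 1)
    (hη_cont : ContinuousOn η (Set.Icc 0 1))
    (hη_mem : ∀ x ∈ Set.Icc (0:ℝ) 1, η x ∈ Set.Icc (0:ℝ) 1)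
    (μL μR Gstar : ℝ → ℝ) (μt : ℝ → ℝ → ℝ) (R : ℝ → ℝ)
    (hμL : ∀ s, μL s = (∫ x in (0:ℝ)..s, η x) / s)
    (hμR : ∀ s, μR s = (∫ x in s..(1:ℝ), η x) / (1 - s))
    (hGstar : ∀ s, Gstar s = s * |μL s - c| + (1 - s) * |μR s - c|)
    (hμt : ∀ x s, μt x s = if x ≤ s then μL s else μR s)
    (hR : ∀ s, R s = ∫ x in (0:ℝ)..1,
        ((if c < η x ∧ μt x s ≤ c then (1:ℝ) else 0) +
         (if η x ≤ c ∧ c < μt x s then (1:ℝ) else 0)))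
    -- the unique threshold crossing and the local regularity of η around it:
    (sstar : ℝ) (hstar : sstar ∈ Set.Ioo (0:ℝ) 1)
    (hcross : η sstar = c)
    (huniq : ∀ s ∈ Set.Ioo (0:ℝ) 1, η s = c → s = sstar)
    (ε₀ : ℝ) (hε₀ : 0 < ε₀)
    (hsub : Set.Icc (sstar - ε₀) (sstar + ε₀) ⊆ Set.Ioo (0:ℝ) 1)
    (hmono : StrictMonoOn η (Set.Icc (sstar - ε₀) (sstar + ε₀)) ∨
             StrictAntiOn η (Set.Icc (sstar - ε₀) (sstar + ε₀)))
    (hdiff : DifferentiableOn ℝ η (Set.Icc (sstar - ε₀) (sstar + ε₀)))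
    -- sampling model: (X i, Y i) i.i.d., X uniform on [0,1], Y | X Bernoulli (η X)
    (Ω : Type*) [MeasureSpace Ω] [IsProbabilityMeasure (ℙ : Measure Ω)]
    (X Y : ℕ → Ω → ℝ)
    (hX_meas : ∀ i, Measurable (X i)) (hY_meas : ∀ i, Measurable (Y i))
    (hiid : iIndepFun (m := fun _ : ℕ => (inferInstance : MeasurableSpace (ℝ × ℝ)))
        (fun i ω => (X i ω, Y i ω)) ℙ)
    (hident : ∀ i j : ℕ, Measure.map (fun ω => (X i ω, Y i ω)) (ℙ : Measure Ω) =
        Measure.map (fun ω => (X j ω, Y j ω)) (ℙ : Measure Ω))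
    (hX_unif : ∀ i, Measure.map (X i) (ℙ : Measure Ω) =
        volume.restrict (Set.Icc (0:ℝ) 1))
    (hY01 : ∀ i ω, Y i ω = 0 ∨ Y i ω = 1)
    (hjoint : ∀ i, ∀ A : Set ℝ, MeasurableSet A →
        (ℙ : Measure Ω) {ω | X i ω ∈ A ∧ Y i ω = 1} =
          ENNReal.ofReal (∫ x in A ∩ Set.Icc (0:ℝ) 1, η x))
    -- the empirical MDFS objective (the convention 0/0 = 0 holds in Lean):
    (Ghat : ℕ → ℝ → Ω → ℝ)
    (hGhat : ∀ n s ω, Ghat n s ω =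
        s * |(∑ i ∈ Finset.range n, Y i ω * (if X i ω ≤ s then (1:ℝ) else 0)) /
              (∑ i ∈ Finset.range n, (if X i ω ≤ s then (1:ℝ) else 0)) - c| +
        (1 - s) * |(∑ i ∈ Finset.range n, Y i ω * (if s < X i ω then (1:ℝ) else 0)) /
              (∑ i ∈ Finset.range n, (if s < X i ω then (1:ℝ) else 0)) - c|)
    (ε : ℝ) (hε : ε ∈ Set.Ioo (0:ℝ) (1/2))
    (hstar_mem : sstar ∈ Set.Ioo ε (1 - ε))
    -- near-maximizing estimators:
    (shat : ℕ → Ω → ℝ) (δ : ℕ → ℝ)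
    (hδ : Tendsto δ atTop (nhds 0))
    (hshat_mem : ∀ n ω, shat n ω ∈ Set.Ioo ε (1 - ε))
    (hshat_near : ∀ n ω,
        sSup ((fun s => Ghat n s ω) '' Set.Ioo ε (1 - ε)) - δ n ≤
          Ghat n (shat n ω) ω) :
    TendstoInMeasure (ℙ : Measure Ω) (fun n ω => R (shat n ω)) atTop
      (fun _ => (0:ℝ)) := by
  have hε0 : 0 < ε := hε.1
  have hε12 : ε < 1/2 := hε.2
  have hintη : ∀ p q : ℝ, p ∈ Icc (0:ℝ) 1 → q ∈ Icc (0:ℝ) 1 →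
      IntervalIntegrable η volume p q := fun p q hp hq =>
    (hη_cont.mono (uIcc_subset_Icc hp hq)).intervalIntegrable
  -- monotonicity/Lipschitz facts for the integral of η
  have hIe_mono : ∀ p q : ℝ, 0 ≤ p → p ≤ q → q ≤ 1 →
      (∫ x in (0:ℝ)..p, η x) ≤ (∫ x in (0:ℝ)..q, η x) ∧
      (∫ x in (0:ℝ)..q, η x) - (∫ x in (0:ℝ)..p, η x) ≤ q - p := by
    intro p q hp hpq hq1
    have hpI : p ∈ Icc (0:ℝ) 1 := ⟨hp, by linarith⟩
    have hqI : q ∈ Icc (0:ℝ) 1 := ⟨by linarith, hq1⟩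
    have h0I : (0:ℝ) ∈ Icc (0:ℝ) 1 := ⟨le_refl _, by norm_num⟩
    have hadd : (∫ x in (0:ℝ)..p, η x) + (∫ x in p..q, η x) = ∫ x in (0:ℝ)..q, η x :=
      integral_add_adjacent_intervals (hintη 0 p h0I hpI) (hintη p q hpI hqI)
    have h0 : 0 ≤ ∫ x in p..q, η x := by
      apply intervalIntegral.integral_nonneg hpq
      intro x hx
      exact (hη_mem x ⟨le_trans hp hx.1, le_trans hx.2 hq1⟩).1
    have h1 : (∫ x in p..q, η x) ≤ ∫ x in p..q, (1:ℝ) := by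
      apply intervalIntegral.integral_mono_on hpq (hintη p q hpI hqI) intervalIntegrable_const
      intro x hx
      exact (hη_mem x ⟨le_trans hp hx.1, le_trans hx.2 hq1⟩).2
    rw [intervalIntegral.integral_const, smul_eq_mul, mul_one] at h1
    exact ⟨by linarith, by linarith⟩
  have hIe_zero : (∫ x in (0:ℝ)..(0:ℝ), η x) = 0 := intervalIntegral.integral_same
  have hIe_nonneg : ∀ q : ℝ, 0 ≤ q → q ≤ 1 → 0 ≤ ∫ x in (0:ℝ)..q, η x := by
    intro q h0 h1
    have := (hIe_mono 0 q (le_refl _) h0 h1).1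
    rw [hIe_zero] at this
    exact this
  have hIe_le_one : (∫ x in (0:ℝ)..(1:ℝ), η x) ≤ 1 := by
    have := (hIe_mono 0 1 (le_refl _) (by norm_num) (le_refl _)).2
    rw [hIe_zero] at this
    linarith
  -- Ghat is bounded by 1 on (ε, 1-ε)
  have hGhatle : ∀ (n : ℕ) (s : ℝ) (ω : Ω), s ∈ Ioo ε (1-ε) → Ghat n s ω ≤ 1 := by
    intro n s ω hs
    have hs0 : 0 ≤ s := le_of_lt (lt_trans hε0 hs.1)
    have hs1 : s ≤ 1 := by have := hs.2; linarith
    rw [hGhat]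
    have hr1 := mdfs_ratio01 (∑ i ∈ Finset.range n, Y i ω * (if X i ω ≤ s then (1:ℝ) else 0))
      (∑ i ∈ Finset.range n, (if X i ω ≤ s then (1:ℝ) else 0))
      (Finset.sum_nonneg (fun i _ => by
        rcases hY01 i ω with h | h <;> by_cases h2 : X i ω ≤ s <;> simp [h, h2]))
      (Finset.sum_le_sum (fun i _ => by
        rcases hY01 i ω with h | h <;> by_cases h2 : X i ω ≤ s <;> simp [h, h2]))
    have hr2 := mdfs_ratio01 (∑ i ∈ Finset.range n, Y i ω * (if s < X i ω then (1:ℝ) else 0))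
      (∑ i ∈ Finset.range n, (if s < X i ω then (1:ℝ) else 0))
      (Finset.sum_nonneg (fun i _ => by
        rcases hY01 i ω with h | h <;> by_cases h2 : s < X i ω <;> simp [h, h2]))
      (Finset.sum_le_sum (fun i _ => by
        rcases hY01 i ω with h | h <;> by_cases h2 : s < X i ω <;> simp [h, h2]))
    have ha1 : |(∑ i ∈ Finset.range n, Y i ω * (if X i ω ≤ s then (1:ℝ) else 0)) /
        (∑ i ∈ Finset.range n, (if X i ω ≤ s then (1:ℝ) else 0)) - c| ≤ 1 := by
      rw [abs_le]
      constructor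
      · have := hc.2; linarith [hr1.1]
      · have := hc.1; linarith [hr1.2]
    have ha2 : |(∑ i ∈ Finset.range n, Y i ω * (if s < X i ω then (1:ℝ) else 0)) /
        (∑ i ∈ Finset.range n, (if s < X i ω then (1:ℝ) else 0)) - c| ≤ 1 := by
      rw [abs_le]
      constructor
      · have := hc.2; linarith [hr2.1]
      · have := hc.1; linarith [hr2.2]
    nlinarith [abs_nonneg ((∑ i ∈ Finset.range n, Y i ω * (if X i ω ≤ s then (1:ℝ) else 0)) /
        (∑ i ∈ Finset.range n, (if X i ω ≤ s then (1:ℝ) else 0)) - c),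
      abs_nonneg ((∑ i ∈ Finset.range n, Y i ω * (if s < X i ω then (1:ℝ) else 0)) /
        (∑ i ∈ Finset.range n, (if s < X i ω then (1:ℝ) else 0)) - c)]
  -- start of the main argument
  rw [tendstoInMeasure_iff_dist]
  intro a ha
  obtain ⟨Δ, hΔ0, hDET⟩ := mdfs_det η c hη_cont μL μR Gstar μt R hμL hμR hGstar hμt hR
    sstar hstar hcross huniq ε₀ hε₀ hsub hmono ε hε hstar_mem a ha
  set u0 : ℝ := min (ε/2) (Δ*ε/40) with hu0def
  have hu00 : 0 < u0 := lt_min (by linarith) (by positivity)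
  obtain ⟨k, hkgt⟩ := exists_nat_gt (max 1 (2/u0))
  have hk1R : (1:ℝ) < k := lt_of_le_of_lt (le_max_left _ _) hkgt
  have hk1 : 1 ≤ k := by exact_mod_cast hk1R.le
  have hkpos : (0:ℝ) < k := by linarith
  have hkinv : 1/(k:ℝ) < u0/2 := by
    have h2 : 2 < (k:ℝ) * u0 := (div_lt_iff₀ hu00).mp (lt_of_le_of_lt (le_max_right _ _) hkgt)
    rw [div_lt_div_iff₀ hkpos (by norm_num : (0:ℝ) < 2)]
    nlinarith
  set θ : ℝ := u0/2 with hθdef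
  have hθ0 : 0 < θ := by positivity
  -- bad events
  set BF : ℕ → ℕ → Set Ω := fun n j =>
    {ω | θ ≤ |(∑ i ∈ Finset.range n, (if X i ω ≤ (j:ℝ)/(k:ℝ) then (1:ℝ) else 0))/(n:ℝ)
        - (j:ℝ)/(k:ℝ)|} with hBF
  set BH : ℕ → ℕ → Set Ω := fun n j =>
    {ω | θ ≤ |(∑ i ∈ Finset.range n, Y i ω * (if X i ω ≤ (j:ℝ)/(k:ℝ) then (1:ℝ) else 0))/(n:ℝ)
        - ∫ x in (0:ℝ)..((j:ℝ)/(k:ℝ)), η x|} with hBH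
  set BY : ℕ → Set Ω := fun n =>
    {ω | θ ≤ |(∑ i ∈ Finset.range n, Y i ω)/(n:ℝ) - ∫ x in (0:ℝ)..(1:ℝ), η x|} with hBY
  -- the main inclusion
  have hincl : ∀ n : ℕ, 1 ≤ n → δ n < Δ/2 →
      {ω | a ≤ dist (R (shat n ω)) 0} ⊆
        ((⋃ j ∈ Finset.range (k+1), BF n j) ∪ (⋃ j ∈ Finset.range (k+1), BH n j)) ∪ BY n := by
    intro n hn hδn ω hω
    by_contra hcon
    have hnpos : (0:ℝ) < n := by exact_mod_cast hn
    -- extract good grid bounds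
    have hgF : ∀ j : ℕ, j ≤ k →
        |(∑ i ∈ Finset.range n, (if X i ω ≤ (j:ℝ)/(k:ℝ) then (1:ℝ) else 0))/(n:ℝ)
          - (j:ℝ)/(k:ℝ)| < θ := by
      intro j hj
      by_contra hge
      push_neg at hge
      exact hcon (Set.mem_union_left _ (Set.mem_union_left _
        (Set.mem_biUnion (Finset.mem_range.mpr (Nat.lt_succ_of_le hj)) hge)))
    have hgH : ∀ j : ℕ, j ≤ k →
        |(∑ i ∈ Finset.range n, Y i ω * (if X i ω ≤ (j:ℝ)/(k:ℝ) then (1:ℝ) else 0))/(n:ℝ)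
          - ∫ x in (0:ℝ)..((j:ℝ)/(k:ℝ)), η x| < θ := by
      intro j hj
      by_contra hge
      push_neg at hge
      exact hcon (Set.mem_union_left _ (Set.mem_union_right _
        (Set.mem_biUnion (Finset.mem_range.mpr (Nat.lt_succ_of_le hj)) hge)))
    have hgY : |(∑ i ∈ Finset.range n, Y i ω)/(n:ℝ) - ∫ x in (0:ℝ)..(1:ℝ), η x| < θ := by
      by_contra hge
      push_neg at hge
      exact hcon (Set.mem_union_right _ hge)
    -- uniform bounds via the grid lemma
    have hFmono : Monotone (fun s : ℝ =>
        (∑ i ∈ Finset.range n, (if X i ω ≤ s then (1:ℝ) else 0))/(n:ℝ)) := by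
      intro s t hst
      have hsum : (∑ i ∈ Finset.range n, (if X i ω ≤ s then (1:ℝ) else 0)) ≤
          ∑ i ∈ Finset.range n, (if X i ω ≤ t then (1:ℝ) else 0) := by
        apply Finset.sum_le_sum
        intro i _
        by_cases h1 : X i ω ≤ s
        · rw [if_pos h1, if_pos (le_trans h1 hst)]
        · rw [if_neg h1]
          by_cases h2 : X i ω ≤ t <;> simp [h2]
      exact (div_le_div_iff_of_pos_right hnpos).mpr hsum
    have hHmono : Monotone (fun s : ℝ =>
        (∑ i ∈ Finset.range n, Y i ω * (if X i ω ≤ s then (1:ℝ) else 0))/(n:ℝ)) := by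
      intro s t hst
      have hsum : (∑ i ∈ Finset.range n, Y i ω * (if X i ω ≤ s then (1:ℝ) else 0)) ≤
          ∑ i ∈ Finset.range n, Y i ω * (if X i ω ≤ t then (1:ℝ) else 0) := by
        apply Finset.sum_le_sum
        intro i _
        have hY0 : 0 ≤ Y i ω := by rcases hY01 i ω with h | h <;> simp [h]
        apply mul_le_mul_of_nonneg_left ?_ hY0
        by_cases h1 : X i ω ≤ s
        · rw [if_pos h1, if_pos (le_trans h1 hst)]
        · rw [if_neg h1]
          by_cases h2 : X i ω ≤ t <;> simp [h2]
      exact (div_le_div_iff_of_pos_right hnpos).mpr hsum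
    have hFa := mdfs_grid
      (fun s : ℝ => (∑ i ∈ Finset.range n, (if X i ω ≤ s then (1:ℝ) else 0))/(n:ℝ))
      (fun q : ℝ => q) hFmono
      (fun p q _ hpq _ => ⟨hpq, by linarith⟩) k hk1 θ
      (fun j hj => le_of_lt (hgF j hj))
    have hHa := mdfs_grid
      (fun s : ℝ => (∑ i ∈ Finset.range n, Y i ω * (if X i ω ≤ s then (1:ℝ) else 0))/(n:ℝ))
      (fun q : ℝ => ∫ x in (0:ℝ)..q, η x) hHmono
      (fun p q hp hpq hq1 => hIe_mono p q hp hpq hq1) k hk1 θ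
      (fun j hj => le_of_lt (hgH j hj))
    have hu0le : θ + 1/(k:ℝ) ≤ u0 := by
      rw [hθdef]
      linarith
    -- Ghat is uniformly close to Gstar on (ε, 1-ε)
    have hGG : ∀ s, s ∈ Ioo ε (1-ε) → |Ghat n s ω - Gstar s| ≤ Δ/4 := by
      intro s hs
      obtain ⟨hsl, hsr⟩ := hs
      have hs0 : 0 < s := lt_trans hε0 hsl
      have hs1 : s < 1 := by linarith
      have hsIcc : s ∈ Icc (0:ℝ) 1 := ⟨le_of_lt hs0, le_of_lt hs1⟩
      have h0Icc : (0:ℝ) ∈ Icc (0:ℝ) 1 := ⟨le_refl _, by norm_num⟩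
      have h1Icc : (1:ℝ) ∈ Icc (0:ℝ) 1 := ⟨by norm_num, le_refl _⟩
      rw [hGhat n s ω]
      set N : ℝ := ∑ i ∈ Finset.range n, (if X i ω ≤ s then (1:ℝ) else 0) with hN
      set H : ℝ := ∑ i ∈ Finset.range n, Y i ω * (if X i ω ≤ s then (1:ℝ) else 0) with hH
      set T : ℝ := ∑ i ∈ Finset.range n, (if s < X i ω then (1:ℝ) else 0) with hT
      set B : ℝ := ∑ i ∈ Finset.range n, Y i ω * (if s < X i ω then (1:ℝ) else 0) with hB
      set SY : ℝ := ∑ i ∈ Finset.range n, Y i ω with hSY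
      have hNT : N + T = (n:ℝ) := by
        rw [hN, hT, ← Finset.sum_add_distrib]
        have hone : ∀ i ∈ Finset.range n,
            ((if X i ω ≤ s then (1:ℝ) else 0) + (if s < X i ω then (1:ℝ) else 0)) = 1 := by
          intro i _
          rcases le_or_gt (X i ω) s with h | h
          · rw [if_pos h, if_neg (not_lt.mpr h)]; norm_num
          · rw [if_neg (not_le.mpr h), if_pos h]; norm_num
        rw [Finset.sum_congr rfl hone, Finset.sum_const, Finset.card_range]
        simp
      have hHB : H + B = SY := by
        rw [hH, hB, hSY, ← Finset.sum_add_distrib]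
        apply Finset.sum_congr rfl
        intro i _
        rcases le_or_gt (X i ω) s with h | h
        · rw [if_pos h, if_neg (not_lt.mpr h)]; ring
        · rw [if_neg (not_le.mpr h), if_pos h]; ring
      have hFdev : |N/(n:ℝ) - s| ≤ u0 :=
        le_trans (hFa s (le_of_lt hs0) (le_of_lt hs1)) hu0le
      have hHdev : |H/(n:ℝ) - ∫ x in (0:ℝ)..s, η x| ≤ u0 :=
        le_trans (hHa s (le_of_lt hs0) (le_of_lt hs1)) hu0le
      have hYdev : |SY/(n:ℝ) - ∫ x in (0:ℝ)..(1:ℝ), η x| ≤ u0 :=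
        le_trans (le_of_lt hgY) (by rw [hθdef]; linarith)
      have hratio1 : H / N = (H/(n:ℝ)) / (N/(n:ℝ)) := by
        rcases eq_or_ne N 0 with h | h
        · rw [h]; simp
        · field_simp
      have hratio2 : B / T = (SY/(n:ℝ) - H/(n:ℝ)) / (1 - N/(n:ℝ)) := by
        have hT' : T = (n:ℝ) - N := by linarith
        have hB' : B = SY - H := by linarith
        rcases eq_or_ne T 0 with h | h
        · have hNn : N = (n:ℝ) := by linarith [hT' ▸ h]
          rw [h, hNn, div_self (ne_of_gt hnpos)]
          simp
        · have hden : 1 - N/(n:ℝ) = T/(n:ℝ) := by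
            rw [hT']
            field_simp
          have hne : (n:ℝ) ≠ 0 := ne_of_gt hnpos
          rw [hden, hB']
          field_simp
          try ring
      rw [hratio1, hratio2]
      have hGstar_eq : Gstar s = |(∫ x in (0:ℝ)..s, η x) - c*s| +
          |((∫ x in (0:ℝ)..(1:ℝ), η x) - ∫ x in (0:ℝ)..s, η x) - c*(1-s)| := by
        rw [hGstar s]
        have hLq : s * |μL s - c| = |(∫ x in (0:ℝ)..s, η x) - c*s| := by
          rw [hμL s]
          have he : (∫ x in (0:ℝ)..s, η x) / s - c = ((∫ x in (0:ℝ)..s, η x) - c*s)/s := by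
            field_simp
          rw [he, abs_div, abs_of_pos hs0, mul_div_cancel₀ _ (ne_of_gt hs0)]
        have hRq : (1-s) * |μR s - c| =
            |((∫ x in (0:ℝ)..(1:ℝ), η x) - ∫ x in (0:ℝ)..s, η x) - c*(1-s)| := by
          rw [hμR s]
          have hJ : (∫ x in s..(1:ℝ), η x) =
              (∫ x in (0:ℝ)..(1:ℝ), η x) - ∫ x in (0:ℝ)..s, η x := by
            have := integral_add_adjacent_intervals (hintη 0 s h0Icc hsIcc)
              (hintη s 1 hsIcc h1Icc)
            linarith
          have h1s : 0 < 1 - s := by linarith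
          have he : (∫ x in s..(1:ℝ), η x)/(1-s) - c =
              (((∫ x in (0:ℝ)..(1:ℝ), η x) - ∫ x in (0:ℝ)..s, η x) - c*(1-s))/(1-s) := by
            rw [hJ]
            field_simp
          rw [he, abs_div, abs_of_pos h1s, mul_div_cancel₀ _ (ne_of_gt h1s)]
        rw [hLq, hRq]
      rw [hGstar_eq]
      have hclose := mdfs_close c s ε u0 (N/(n:ℝ)) (H/(n:ℝ)) (SY/(n:ℝ))
        (∫ x in (0:ℝ)..s, η x) (∫ x in (0:ℝ)..(1:ℝ), η x)
        (le_of_lt hc.1) (le_of_lt hc.2) hε0 (le_of_lt hsl) (by linarith)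
        (le_of_lt hu00) (min_le_left _ _) hFdev hHdev hYdev
        (hIe_nonneg s (le_of_lt hs0) (le_of_lt hs1))
        (hIe_mono s 1 (le_of_lt hs0) (le_of_lt hs1) (le_refl _)).1 hIe_le_one
      have hfinal : 10*u0/ε ≤ Δ/4 := by
        rw [div_le_div_iff₀ hε0 (by norm_num : (0:ℝ) < 4)]
        have hb : u0 ≤ Δ*ε/40 := min_le_right _ _
        nlinarith
      exact le_trans hclose hfinal
    -- sSup chain and gap
    have hbddA : BddAbove ((fun s => Ghat n s ω) '' Ioo ε (1-ε)) := by
      refine ⟨1, ?_⟩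
      rintro z ⟨s, hsmem, rfl⟩
      exact hGhatle n s ω hsmem
    have hchain : Ghat n sstar ω - δ n ≤ Ghat n (shat n ω) ω := by
      have h1 : Ghat n sstar ω ≤ sSup ((fun s => Ghat n s ω) '' Ioo ε (1-ε)) :=
        le_csSup hbddA (Set.mem_image_of_mem _ hstar_mem)
      linarith [hshat_near n ω]
    have hgap : Gstar sstar - Gstar (shat n ω) < Δ := by
      have h1 := hGG sstar hstar_mem
      have h2 := hGG (shat n ω) (hshat_mem n ω)
      rw [abs_le] at h1 h2
      linarith [h1.1, h1.2, h2.1, h2.2, hchain]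
    obtain ⟨hReq, hRlt⟩ := hDET (shat n ω) (hshat_mem n ω) hgap
    have hlt : dist (R (shat n ω)) 0 < a := by
      rw [Real.dist_eq, sub_zero, hReq, abs_abs]
      exact hRlt
    simp only [Set.mem_setOf_eq] at hω
    linarith
  -- limits of the bad-event probabilities
  have hTF : ∀ j ∈ Finset.range (k+1), Tendsto (fun n => (ℙ : Measure Ω) (BF n j))
      atTop (𝓝 0) := by
    intro j hj
    have hj' : j ≤ k := Nat.lt_succ_iff.mp (Finset.mem_range.mp hj)
    have hq0 : 0 ≤ (j:ℝ)/(k:ℝ) := by positivity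
    have hq1 : (j:ℝ)/(k:ℝ) ≤ 1 := by
      rw [div_le_one hkpos]
      exact_mod_cast hj'
    have hgmeas : Measurable (fun p : ℝ × ℝ => if p.1 ≤ (j:ℝ)/(k:ℝ) then (1:ℝ) else 0) :=
      Measurable.ite (measurableSet_le measurable_fst measurable_const)
        measurable_const measurable_const
    have hgint : Integrable (fun ω =>
        (fun p : ℝ × ℝ => if p.1 ≤ (j:ℝ)/(k:ℝ) then (1:ℝ) else 0) (X 0 ω, Y 0 ω))
        (ℙ : Measure Ω) := by
      apply Integrable.mono' (integrable_const (1:ℝ))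
        (hgmeas.comp ((hX_meas 0).prodMk (hY_meas 0))).aestronglyMeasurable
      apply ae_of_all
      intro ω
      by_cases h : X 0 ω ≤ (j:ℝ)/(k:ℝ) <;> simp [h]
    have hE : (∫ ω', (fun p : ℝ × ℝ => if p.1 ≤ (j:ℝ)/(k:ℝ) then (1:ℝ) else 0)
        (X 0 ω', Y 0 ω') ∂(ℙ : Measure Ω)) = (j:ℝ)/(k:ℝ) :=
      mdfs_E1 (X 0) (hX_meas 0) (hX_unif 0) ((j:ℝ)/(k:ℝ)) hq0 hq1
    have hlln := mdfs_lln X Y hX_meas hY_meas hiid hident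
      (fun p : ℝ × ℝ => if p.1 ≤ (j:ℝ)/(k:ℝ) then (1:ℝ) else 0) hgmeas hgint θ hθ0
    rw [hE] at hlln
    exact hlln
  have hTH : ∀ j ∈ Finset.range (k+1), Tendsto (fun n => (ℙ : Measure Ω) (BH n j))
      atTop (𝓝 0) := by
    intro j hj
    have hj' : j ≤ k := Nat.lt_succ_iff.mp (Finset.mem_range.mp hj)
    have hq0 : 0 ≤ (j:ℝ)/(k:ℝ) := by positivity
    have hq1 : (j:ℝ)/(k:ℝ) ≤ 1 := by
      rw [div_le_one hkpos]
      exact_mod_cast hj'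
    have hgmeas : Measurable (fun p : ℝ × ℝ =>
        p.2 * (if p.1 ≤ (j:ℝ)/(k:ℝ) then (1:ℝ) else 0)) :=
      measurable_snd.mul (Measurable.ite (measurableSet_le measurable_fst measurable_const)
        measurable_const measurable_const)
    have hgint : Integrable (fun ω =>
        (fun p : ℝ × ℝ => p.2 * (if p.1 ≤ (j:ℝ)/(k:ℝ) then (1:ℝ) else 0)) (X 0 ω, Y 0 ω))
        (ℙ : Measure Ω) := by
      apply Integrable.mono' (integrable_const (1:ℝ))
        (hgmeas.comp ((hX_meas 0).prodMk (hY_meas 0))).aestronglyMeasurable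
      apply ae_of_all
      intro ω
      rcases hY01 0 ω with h | h <;> by_cases h2 : X 0 ω ≤ (j:ℝ)/(k:ℝ) <;> simp [h, h2]
    have hE : (∫ ω', (fun p : ℝ × ℝ => p.2 * (if p.1 ≤ (j:ℝ)/(k:ℝ) then (1:ℝ) else 0))
        (X 0 ω', Y 0 ω') ∂(ℙ : Measure Ω)) = ∫ x in (0:ℝ)..((j:ℝ)/(k:ℝ)), η x :=
      mdfs_E2 η hη_mem (X 0) (Y 0) (hX_meas 0) (hY_meas 0) (hY01 0) (hjoint 0)
        ((j:ℝ)/(k:ℝ)) hq0 hq1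
    have hlln := mdfs_lln X Y hX_meas hY_meas hiid hident
      (fun p : ℝ × ℝ => p.2 * (if p.1 ≤ (j:ℝ)/(k:ℝ) then (1:ℝ) else 0)) hgmeas hgint θ hθ0
    rw [hE] at hlln
    exact hlln
  have hTY : Tendsto (fun n => (ℙ : Measure Ω) (BY n)) atTop (𝓝 0) := by
    have hgmeas : Measurable (fun p : ℝ × ℝ => p.2) := measurable_snd
    have hgint : Integrable (fun ω => (fun p : ℝ × ℝ => p.2) (X 0 ω, Y 0 ω))
        (ℙ : Measure Ω) := by
      apply Integrable.mono' (integrable_const (1:ℝ))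
        (hgmeas.comp ((hX_meas 0).prodMk (hY_meas 0))).aestronglyMeasurable
      apply ae_of_all
      intro ω
      rcases hY01 0 ω with h | h <;> simp [h]
    have hE : (∫ ω', (fun p : ℝ × ℝ => p.2) (X 0 ω', Y 0 ω') ∂(ℙ : Measure Ω)) =
        ∫ x in (0:ℝ)..(1:ℝ), η x :=
      mdfs_E3 η hη_mem (X 0) (Y 0) (hX_meas 0) (hY_meas 0) (hY01 0) (hjoint 0)
    have hlln := mdfs_lln X Y hX_meas hY_meas hiid hident
      (fun p : ℝ × ℝ => p.2) hgmeas hgint θ hθ0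
    rw [hE] at hlln
    exact hlln
  -- assemble
  have hsum : Tendsto (fun n => (∑ j ∈ Finset.range (k+1), (ℙ : Measure Ω) (BF n j)) +
      (∑ j ∈ Finset.range (k+1), (ℙ : Measure Ω) (BH n j)) + (ℙ : Measure Ω) (BY n))
      atTop (𝓝 0) := by
    have h1 : Tendsto (fun n => ∑ j ∈ Finset.range (k+1), (ℙ : Measure Ω) (BF n j))
        atTop (𝓝 0) := by
      have := tendsto_finset_sum (Finset.range (k+1)) hTF
      simpa using this
    have h2 : Tendsto (fun n => ∑ j ∈ Finset.range (k+1), (ℙ : Measure Ω) (BH n j))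
        atTop (𝓝 0) := by
      have := tendsto_finset_sum (Finset.range (k+1)) hTH
      simpa using this
    have := (h1.add h2).add hTY
    simpa using this
  have hev : ∀ᶠ n in atTop, (ℙ : Measure Ω) {ω | a ≤ dist (R (shat n ω)) 0} ≤
      (∑ j ∈ Finset.range (k+1), (ℙ : Measure Ω) (BF n j)) +
      (∑ j ∈ Finset.range (k+1), (ℙ : Measure Ω) (BH n j)) + (ℙ : Measure Ω) (BY n) := by
    have hev1 : ∀ᶠ n : ℕ in atTop, 1 ≤ n := eventually_ge_atTop 1
    have hev2 : ∀ᶠ n in atTop, δ n < Δ/2 := hδ.eventually_lt_const (by linarith)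
    filter_upwards [hev1, hev2] with n h1 h2
    calc (ℙ : Measure Ω) {ω | a ≤ dist (R (shat n ω)) 0}
        ≤ (ℙ : Measure Ω) (((⋃ j ∈ Finset.range (k+1), BF n j) ∪
            (⋃ j ∈ Finset.range (k+1), BH n j)) ∪ BY n) := measure_mono (hincl n h1 h2)
      _ ≤ (ℙ : Measure Ω) ((⋃ j ∈ Finset.range (k+1), BF n j) ∪
            (⋃ j ∈ Finset.range (k+1), BH n j)) + (ℙ : Measure Ω) (BY n) :=
          measure_union_le _ _
      _ ≤ ((ℙ : Measure Ω) (⋃ j ∈ Finset.range (k+1), BF n j) +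
            (ℙ : Measure Ω) (⋃ j ∈ Finset.range (k+1), BH n j)) + (ℙ : Measure Ω) (BY n) :=
          add_le_add_left (measure_union_le _ _) _
      _ ≤ (∑ j ∈ Finset.range (k+1), (ℙ : Measure Ω) (BF n j)) +
          (∑ j ∈ Finset.range (k+1), (ℙ : Measure Ω) (BH n j)) + (ℙ : Measure Ω) (BY n) := by
          apply add_le_add_left
          exact add_le_add (measure_biUnion_finset_le _ _) (measure_biUnion_finset_le _ _)
  exact tendsto_of_tendsto_of_tendsto_of_le_of_le' tendsto_const_nhds hsum
    (Eventually.of_forall (fun n => zero_le)) hev
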